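/- Let X be a Binomial(n-2, 1/2) random variable with n ≥ 4. Then the conditional expectation E[1/(2+X) | X ≤ n-3] equals (2/n)·(1 - 1/(n-1) + (n-2)/((2^{n-1}-2)(n-1))). -/
import Mathlib

open Finset

lemma sumA (N : ℕ) : ∑ j ∈ range (N+1), ((N.choose j : ℚ)) = 2^N := by
  have := Nat.sum_range_choose N
  exact_mod_cast congrArg (Nat.cast : ℕ → ℚ) this

lemma succ_mul_choose_q (N k : ℕ) :
    ((k:ℚ)+1) * ((N+1).choose (k+1) : ℚ) = ((N:ℚ)+1) * (N.choose k : ℚ) := by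
  have := Nat.add_one_mul_choose_eq N k
  have : ((N+1) * N.choose k : ℕ) = ((N+1).choose (k+1) * (k+1) : ℕ) := by
    simpa [Nat.succ_eq_add_one] using this
  have h := congrArg (Nat.cast : ℕ → ℚ) this
  push_cast at h
  linarith [h]

lemma sumB (N : ℕ) : ∑ j ∈ range (N+2), (j:ℚ) * ((N+1).choose j : ℚ) = ((N:ℚ)+1) * 2^N := by
  rw [Finset.sum_range_succ']
  simp only [Nat.cast_zero, zero_mul, add_zero]
  have : ∀ k ∈ range (N+1), ((k+1 : ℕ):ℚ) * ((N+1).choose (k+1) : ℚ)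
      = ((N:ℚ)+1) * (N.choose k : ℚ) := by
    intro k _
    push_cast
    exact succ_mul_choose_q N k
  rw [Finset.sum_congr rfl this, ← Finset.mul_sum, sumA]

lemma keyid (m k : ℕ) :
    ((m+2).choose (k+2) : ℚ) * (((k:ℚ)+1) * ((k:ℚ)+2)) = ((m:ℚ)+1)*((m:ℚ)+2) * (m.choose k : ℚ) := by
  have h1 := succ_mul_choose_q (m+1) (k+1)
  have h2 := succ_mul_choose_q m k
  push_cast at h1 h2 ⊢
  nlinarith [h1, h2]

lemma sumT (m : ℕ) :
    ∑ k ∈ range (m+1), (((m+2).choose (k+2) : ℚ)) * ((k:ℚ)+1)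
      = (m:ℚ) * 2^(m+1) + 1 := by
  have hB := sumB (m+1)
  rw [show m+1+2 = m+3 from rfl] at hB
  rw [Finset.sum_range_succ', Finset.sum_range_succ'] at hB
  have hA : ∑ j ∈ range (m+3), ((m+2).choose j : ℚ) = 2^(m+2) := sumA (m+2)
  rw [Finset.sum_range_succ', Finset.sum_range_succ'] at hA
  have rB : ∑ x ∈ range (m+1), ((x:ℚ) + 1 + 1) * (((m+1+1)).choose (x+1+1) : ℚ)
      = ∑ k ∈ range (m+1), (((m+2).choose (k+2) : ℚ)) * ((k:ℚ)+2) := by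
    apply Finset.sum_congr rfl; intro k _; ring_nf
  have rA : ∑ k ∈ range (m+1), (((m+2)).choose (k+1+1) : ℚ)
      = ∑ k ∈ range (m+1), (((m+2).choose (k+2) : ℚ)) := rfl
  push_cast at hB hA
  rw [rB] at hB
  rw [rA] at hA
  have hch : ((m+2).choose 1 : ℚ) = (m:ℚ)+2 := by
    rw [Nat.choose_one_right]; push_cast; ring_nf
  simp only [Nat.choose_zero_right, Nat.cast_one, hch] at hB hA
  have split : ∑ k ∈ range (m+1), (((m+2).choose (k+2) : ℚ)) * ((k:ℚ)+1)
      = (∑ k ∈ range (m+1), (((m+2).choose (k+2) : ℚ)) * ((k:ℚ)+2))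
        - ∑ k ∈ range (m+1), (((m+2).choose (k+2) : ℚ)) := by
    rw [← Finset.sum_sub_distrib]; apply Finset.sum_congr rfl; intro k _; ring
  have h2 : (2:ℚ)^(m+2) = 2 * 2^(m+1) := by ring
  rw [h2] at hA
  rw [split]
  linarith [hB, hA]

lemma sumS (m : ℕ) :
    ∑ k ∈ range m, ((m.choose k : ℚ)) * (1 / ((k:ℚ)+2))
      = (m:ℚ) * (2^(m+1) - 1) / (((m:ℚ)+1)*((m:ℚ)+2)) := by
  have hT := sumT m
  rw [Finset.sum_range_succ] at hT
  -- full sum minus last term k = m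
  have hT' : ∑ k ∈ range m, (((m+2).choose (k+2) : ℚ)) * ((k:ℚ)+1)
      = (m:ℚ) * 2^(m+1) + 1 - (((m+2).choose (m+2) : ℚ)) * ((m:ℚ)+1) := by
    linarith [hT]
  rw [Nat.choose_self] at hT'
  have hm1 : ((m:ℚ)+1) ≠ 0 := by positivity
  have hm2 : ((m:ℚ)+2) ≠ 0 := by positivity
  have step : ∀ k ∈ range m, ((m.choose k : ℚ)) * (1 / ((k:ℚ)+2))
      = (((m+2).choose (k+2) : ℚ)) * ((k:ℚ)+1) / (((m:ℚ)+1)*((m:ℚ)+2)) := by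
    intro k _
    have hk2 : ((k:ℚ)+2) ≠ 0 := by positivity
    have := keyid m k
    field_simp
    nlinarith [this]
  rw [Finset.sum_congr rfl step, ← Finset.sum_div, hT']
  push_cast
  ring

/-- `X ~ Binomial(n-2, 1/2)`; conditional expectation
`E[1/(2+X) | X ≤ n-3] = (2/n)(1 - 1/(n-1) + (n-2)/((2^{n-1}-2)(n-1)))`. -/
theorem cond_exp_inv_two_add_binomial (n : ℕ) (hn : 4 ≤ n) :
    (∑ k ∈ Finset.range (n - 2),
        ((n - 2).choose k : ℚ) * (1 / 2) ^ (n - 2) * (1 / ((k : ℚ) + 2))) /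
      (∑ k ∈ Finset.range (n - 2), ((n - 2).choose k : ℚ) * (1 / 2) ^ (n - 2))
      = (2 / (n : ℚ)) *
          (1 - 1 / ((n : ℚ) - 1)
            + ((n : ℚ) - 2) / (((2 : ℚ) ^ (n - 1) - 2) * ((n : ℚ) - 1))) := by
  obtain ⟨m, rfl⟩ : ∃ m, n = m + 2 := ⟨n - 2, by omega⟩
  have hm : 2 ≤ m := by omega
  simp only [Nat.add_sub_cancel, show m + 2 - 1 = m + 1 from rfl]
  -- numerator
  have hnum : ∑ k ∈ range m, ((m.choose k : ℚ)) * (1/2)^m * (1 / ((k:ℚ)+2))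
      = (1/2)^m * ((m:ℚ) * (2^(m+1) - 1) / (((m:ℚ)+1)*((m:ℚ)+2))) := by
    rw [← sumS m, Finset.mul_sum]
    congr 1; ext k; ring
  have hden : ∑ k ∈ range m, ((m.choose k : ℚ)) * (1/2)^m
      = (1/2)^m * (2^m - 1) := by
    have hA := sumA m
    rw [Finset.sum_range_succ, Nat.choose_self] at hA
    rw [← Finset.sum_mul]
    push_cast at hA ⊢
    rw [show (∑ k ∈ range m, ((m.choose k : ℚ))) = 2^m - 1 by linarith [hA]]
    ring
  rw [hnum, hden]
  have hp : (0:ℚ) < 2^m := by positivity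
  have hge : (4:ℚ) ≤ 2^m := by
    calc (4:ℚ) = 2^2 := by norm_num
    _ ≤ 2^m := by exact pow_le_pow_right₀ (by norm_num) hm
  have h2m : (2:ℚ)^m - 1 ≠ 0 := by linarith
  have h2m1 : (2:ℚ)^(m+1) - 2 ≠ 0 := by
    rw [pow_succ]; nlinarith
  have hmq : ((m:ℚ)) ≥ 2 := by exact_mod_cast hm
  have hm1 : ((m:ℚ)+1) ≠ 0 := by positivity
  have hm2 : ((m:ℚ)+2) ≠ 0 := by positivity
  have hhalf : ((1:ℚ)/2)^m ≠ 0 := by positivity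
  have hcast : ((m+2 : ℕ):ℚ) = (m:ℚ)+2 := by push_cast; ring
  rw [hcast]
  have hn1 : (m:ℚ)+2-1 = (m:ℚ)+1 := by ring
  have hn2 : (m:ℚ)+2-2 = (m:ℚ) := by ring
  rw [hn1, hn2]
  rw [pow_succ] at h2m1 ⊢
  field_simp
  ring
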